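/- If X̃₁ and X̃₂ are strong fuzzy incidence graphs, then their Cartesian product X̃ = X̃₁ × X̃₂ is a strong fuzzy incidence graph. -/

import Mathlib

/-!
Incidence connectivity is a bottleneck quantity: an incidence path has strength at least `c`
exactly when it runs in the `c`-cut, the graph of the edges both of whose pairs weigh at least
`c`. So the pair `(x, xy)` is strong iff `c ≤ η(x, xy)` whenever the `c`-cut joins `x` to `y`
and `c ≤ η(y, yx)`; indeed, if `η(x, xy) < c` the edge `xy` is not in the `c`-cut, so deleting
the pair `(x, xy)` leaves that cut unchanged.

In this form strength passes to the product. A pair of the product lying over, say, the pair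
`(b, bb')` of `X̃₂` has weight `min (ε₁ a) (η₂(b, bb'))`. Every product pair weighs at most the
factor pair below it, so a `c`-cut walk in the product projects to a `c`-cut walk in `X̃₂` and
the reverse pair gives `c ≤ η₂(b', b'b)`; strength of `X̃₂` then yields `c ≤ η₂(b, bb')`, while
`c ≤ ε₁ a` because the reverse pair weighs at most `ε₁ a`.
-/

open scoped BigOperators

/-- A fuzzy incidence graph on a finite vertex type `V`.  An (undirected, loopless) edge `xy`
is encoded by the symmetric membership function `rho`, and the incidence pair `(x, xy)`
is encoded by `eta x y` (so `eta x y` is the membership value of the pair consisting of the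
vertex `x` and the edge joining `x` and `y`). All membership values lie in `[0,1]`,
`rho xy ≤ min (eps x) (eps y)` and `eta (x, xy) ≤ min (eps x) (rho xy)`. -/
structure FIG (V : Type) [Fintype V] [DecidableEq V] where
  eps : V → ℝ
  rho : V → V → ℝ
  eta : V → V → ℝ
  eps_nonneg : ∀ x, 0 ≤ eps x
  eps_le_one : ∀ x, eps x ≤ 1
  rho_nonneg : ∀ x y, 0 ≤ rho x y
  rho_symm : ∀ x y, rho x y = rho y x
  rho_le : ∀ x y, rho x y ≤ min (eps x) (eps y)
  rho_irrefl : ∀ x, rho x x = 0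
  eta_nonneg : ∀ x y, 0 ≤ eta x y
  eta_le : ∀ x y, eta x y ≤ min (eps x) (rho x y)

namespace FIG

variable {V V₁ V₂ : Type} [Fintype V] [DecidableEq V]
  [Fintype V₁] [DecidableEq V₁] [Fintype V₂] [DecidableEq V₂]

/-- `(x, xy)` is a pair of the fuzzy incidence graph (i.e. belongs to the support `η*`). -/
def IsPair (G : FIG V) (x y : V) : Prop := 0 < G.eta x y

/-- the minimum of the two pair weights along one edge step of an incidence path -/
def pairMin (G : FIG V) (a b : V) : ℝ := min (G.eta a b) (G.eta b a)

/-- the minimum of the pair weights along the internal steps of a vertex list -/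
def chainStrength (G : FIG V) : List V → ℝ
  | [] => 1
  | [_] => 1
  | a :: b :: l => min (G.pairMin a b) (G.chainStrength (b :: l))

/-- The set of incidence strengths of incidence paths from the vertex `x` to the edge `yz`:
a path is recorded by its (pairwise distinct) sequence of vertices, starting at `x` and ending
at an endpoint of the edge `yz`; its strength is the minimum of the weights of its pairs
(pairs of weight `0` are not genuine pairs, but a list using them has strength `0`, so
including such lists does not alter the supremum below). -/
def pathStrengths (G : FIG V) (x y z : V) : Set ℝ :=
  {s | ∃ l : List V, l.Nodup ∧ l.head? = some x ∧
      ((l.getLast? = some y ∧ s = min (G.chainStrength l) (G.eta y z)) ∨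
       (l.getLast? = some z ∧ s = min (G.chainStrength l) (G.eta z y)))}

/-- `ICONN G x y z` is the greatest incidence strength of an incidence path from the
vertex `x` to the edge `yz` (the incidence connectivity `ICONN_G (x, yz)`). -/
noncomputable def ICONN (G : FIG V) (x y z : V) : ℝ := sSup (G.pathStrengths x y z)

/-- the fuzzy incidence graph obtained by deleting the pair `(a, ab)` -/
def deletePair (G : FIG V) (a b : V) : FIG V where
  eps := G.eps
  rho := G.rho
  eta := fun u v => if u = a ∧ v = b then 0 else G.eta u v
  eps_nonneg := G.eps_nonneg
  eps_le_one := G.eps_le_one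
  rho_nonneg := G.rho_nonneg
  rho_symm := G.rho_symm
  rho_le := G.rho_le
  rho_irrefl := G.rho_irrefl
  eta_nonneg := by
    intro u v; split
    · exact le_refl 0
    · exact G.eta_nonneg u v
  eta_le := by
    intro u v; split
    · exact le_min (G.eps_nonneg u) (G.rho_nonneg u v)
    · exact G.eta_le u v

/-- The pair `(x, xy)` is strong: its weight is at least the incidence connectivity
between `x` and the edge `xy` in the graph obtained by deleting the pair `(x, xy)`. -/
def IsStrongPair (G : FIG V) (x y : V) : Prop :=
  (G.deletePair x y).ICONN x x y ≤ G.eta x y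

/-- a strong fuzzy incidence graph: every pair is strong -/
def Strong (G : FIG V) : Prop := ∀ x y, G.IsPair x y → G.IsStrongPair x y

/-- The pair `(x, xy)` is effective: `η(x, xy) = min (ε x) (ρ xy)`. -/
def EffectivePair (G : FIG V) (x y : V) : Prop :=
  G.eta x y = min (G.eps x) (G.rho x y)

/-- a fuzzy incidence graph in which every pair is effective -/
def EffectivePairs (G : FIG V) : Prop := ∀ x y, G.IsPair x y → G.EffectivePair x y

/-- The Cartesian product of two fuzzy incidence graphs: `(a₁,b₁)(a₂,b₂)` is an edge
when `a₁ = a₂` and `b₁b₂ ∈ E₂`, or `b₁ = b₂` and `a₁a₂ ∈ E₁`; a pair of the product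
exists when both corresponding pairs of the factor exist. -/
noncomputable def cartesian (G₁ : FIG V₁) (G₂ : FIG V₂) : FIG (V₁ × V₂) where
  eps := fun p => min (G₁.eps p.1) (G₂.eps p.2)
  rho := fun p q =>
    if p.1 = q.1 then min (G₁.eps p.1) (G₂.rho p.2 q.2)
    else if p.2 = q.2 then min (G₁.rho p.1 q.1) (G₂.eps p.2)
    else 0
  eta := fun p q =>
    if p.1 = q.1 then
      (if 0 < G₂.eta p.2 q.2 ∧ 0 < G₂.eta q.2 p.2 then
        min (G₁.eps p.1) (G₂.eta p.2 q.2) else 0)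
    else if p.2 = q.2 then
      (if 0 < G₁.eta p.1 q.1 ∧ 0 < G₁.eta q.1 p.1 then
        min (G₁.eta p.1 q.1) (G₂.eps p.2) else 0)
    else 0
  eps_nonneg := fun p => le_min (G₁.eps_nonneg p.1) (G₂.eps_nonneg p.2)
  eps_le_one := fun p => min_le_of_left_le (G₁.eps_le_one p.1)
  rho_nonneg := by
    intro p q; split
    · exact le_min (G₁.eps_nonneg _) (G₂.rho_nonneg _ _)
    · split
      · exact le_min (G₁.rho_nonneg _ _) (G₂.eps_nonneg _)
      · exact le_refl 0
  rho_symm := by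
    intro p q; try dsimp only
    by_cases h1 : p.1 = q.1
    · simp [h1, G₂.rho_symm p.2 q.2]
    · by_cases h2 : p.2 = q.2
      · simp [h1, Ne.symm h1, h2, G₁.rho_symm p.1 q.1]
      · simp [h1, Ne.symm h1, h2, Ne.symm h2]
  rho_le := by
    intro p q; split
    · rename_i h1
      refine le_min (le_min (min_le_left _ _) (min_le_of_right_le ?_))
        (le_min (h1 ▸ min_le_left _ _) (min_le_of_right_le ?_))
      · exact le_trans (G₂.rho_le p.2 q.2) (min_le_left _ _)
      · exact le_trans (G₂.rho_le p.2 q.2) (min_le_right _ _)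
    · split
      · rename_i h1 h2
        refine le_min (le_min (min_le_of_left_le ?_) (min_le_right _ _))
          (le_min (min_le_of_left_le ?_) (h2 ▸ min_le_right _ _))
        · exact le_trans (G₁.rho_le p.1 q.1) (min_le_left _ _)
        · exact le_trans (G₁.rho_le p.1 q.1) (min_le_right _ _)
      · exact le_min (le_min (G₁.eps_nonneg _) (G₂.eps_nonneg _))
          (le_min (G₁.eps_nonneg _) (G₂.eps_nonneg _))
  rho_irrefl := by
    intro p; try dsimp only
    rw [if_pos rfl, G₂.rho_irrefl]
    exact min_eq_right (G₁.eps_nonneg p.1)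
  eta_nonneg := by
    intro p q; split
    · split
      · exact le_min (G₁.eps_nonneg _) (G₂.eta_nonneg _ _)
      · exact le_refl 0
    · split
      · split
        · exact le_min (G₁.eta_nonneg _ _) (G₂.eps_nonneg _)
        · exact le_refl 0
      · exact le_refl 0
  eta_le := by
    intro p q; split
    · split
      · refine le_min (le_min (min_le_left _ _) (min_le_of_right_le ?_))
          (le_min (min_le_left _ _) (min_le_of_right_le ?_))
        · exact le_trans (G₂.eta_le p.2 q.2) (min_le_left _ _)
        · exact le_trans (G₂.eta_le p.2 q.2) (min_le_right _ _)
      · exact le_min (le_min (G₁.eps_nonneg _) (G₂.eps_nonneg _))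
          (le_min (G₁.eps_nonneg _) (G₂.rho_nonneg _ _))
    · split
      · split
        · refine le_min (le_min (min_le_of_left_le ?_) (min_le_right _ _))
            (le_min (min_le_of_left_le ?_) (min_le_right _ _))
          · exact le_trans (G₁.eta_le p.1 q.1) (min_le_left _ _)
          · exact le_trans (G₁.eta_le p.1 q.1) (min_le_right _ _)
        · exact le_min (le_min (G₁.eps_nonneg _) (G₂.eps_nonneg _))
            (le_min (G₁.rho_nonneg _ _) (G₂.eps_nonneg _))
      · exact le_min (le_min (G₁.eps_nonneg _) (G₂.eps_nonneg _)) (le_refl 0)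

lemma _root_.SimpleGraph.Reachable.map_of_forall_adj {α β : Type*} {H : SimpleGraph α}
    {K : SimpleGraph β} (f : α → β) (hf : ∀ {a b}, H.Adj a b → K.Reachable (f a) (f b))
    {a b : α} (h : H.Reachable a b) : K.Reachable (f a) (f b) := by
  obtain ⟨w⟩ := h
  induction w with
  | nil => rfl
  | cons hadj _ ih => exact (hf hadj).trans ih

lemma eta_self (G : FIG V) (x : V) : G.eta x x = 0 :=
  le_antisymm ((G.eta_le x x).trans (min_le_right _ _) |>.trans_eq (G.rho_irrefl x))
    (G.eta_nonneg x x)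

lemma eta_le_eps (G : FIG V) (x y : V) : G.eta x y ≤ G.eps x :=
  (G.eta_le x y).trans (min_le_left _ _)

lemma eta_le_one (G : FIG V) (x y : V) : G.eta x y ≤ 1 :=
  (G.eta_le_eps x y).trans (G.eps_le_one x)

lemma ne_of_eta_pos {G : FIG V} {x y : V} (h : 0 < G.eta x y) : x ≠ y := by
  rintro rfl
  exact h.ne' (G.eta_self x)

def cut (G : FIG V) (c : ℝ) : SimpleGraph V where
  Adj a b := a ≠ b ∧ c ≤ G.pairMin a b
  symm := ⟨fun _ _ ⟨hne, hc⟩ => ⟨hne.symm, hc.trans_eq (min_comm _ _)⟩⟩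
  loopless := ⟨fun _ h => h.1 rfl⟩

lemma cut_mono {G G' : FIG V} (h : ∀ a b, G.eta a b ≤ G'.eta a b) (c : ℝ) :
    G.cut c ≤ G'.cut c :=
  fun a b (hab : a ≠ b ∧ _) => ⟨hab.1, hab.2.trans (min_le_min (h a b) (h b a))⟩

lemma isChain_of_le_chainStrength (G : FIG V) {c : ℝ} :
    ∀ {l : List V}, c ≤ G.chainStrength l → l.IsChain (fun a b => c ≤ G.pairMin a b)
  | [], _ => .nil
  | [_], _ => .singleton _
  | _ :: _ :: _, h => List.isChain_cons_cons.2
      ⟨(le_min_iff.1 h).1, isChain_of_le_chainStrength G (le_min_iff.1 h).2⟩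

lemma le_chainStrength_of_isChain (G : FIG V) {c : ℝ} (hc : c ≤ 1) :
    ∀ {l : List V}, l.IsChain (fun a b => c ≤ G.pairMin a b) → c ≤ G.chainStrength l
  | [], _ => hc
  | [_], _ => hc
  | _ :: _ :: _, h =>
    le_min (List.isChain_cons_cons.1 h).1
      (le_chainStrength_of_isChain G hc (List.isChain_cons_cons.1 h).2)

lemma reachable_cut_of_le_chainStrength (G : FIG V) {c : ℝ} (hc : 0 < c) {l : List V}
    {x y : V} (hx : l.head? = some x) (hy : l.getLast? = some y)
    (hl : c ≤ G.chainStrength l) : (G.cut c).Reachable x y := by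
  obtain ⟨t, rfl⟩ := List.head?_eq_some_iff.1 hx
  have hadj : (x :: t).IsChain (G.cut c).Adj :=
    (G.isChain_of_le_chainStrength hl).imp fun a b hab =>
      ⟨ne_of_eta_pos (hc.trans_le (hab.trans (min_le_left _ _))), hab⟩
  rw [SimpleGraph.reachable_iff_reflTransGen]
  exact List.relationReflTransGen_of_exists_isChain_cons t hadj
    (List.getLast_eq_iff_getLast?_eq_some _ |>.2 hy)

lemma pathStrengths_bddAbove (G : FIG V) (x y z : V) : BddAbove (G.pathStrengths x y z) :=
  ⟨1, by
    rintro s ⟨l, -, -, ⟨-, rfl⟩ | ⟨-, rfl⟩⟩ <;> exact (min_le_right _ _).trans (G.eta_le_one _ _)⟩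

lemma le_ICONN_of_reachable_cut (G : FIG V) {c : ℝ} {x y z : V}
    (h : (G.cut c).Reachable x z) (hc : c ≤ G.eta z y) : c ≤ G.ICONN x y z := by
  obtain ⟨p, hp⟩ := h.exists_isPath
  have hchain : c ≤ G.chainStrength p.support :=
    G.le_chainStrength_of_isChain (hc.trans (G.eta_le_one z y))
      (p.isChain_adj_support.imp fun _ _ hab => hab.2)
  refine le_csSup_of_le (G.pathStrengths_bddAbove x y z)
    ⟨p.support, hp.support_nodup, ?_, Or.inr ⟨?_, rfl⟩⟩ (le_min hchain hc)
  · rw [← p.cons_tail_support]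
    rfl
  · rw [List.getLast?_eq_some_getLast p.support_ne_nil, p.getLast_support]

lemma reachable_cut_of_mem_pathStrengths (G : FIG V) {s : ℝ} {x y z : V}
    (hs : s ∈ G.pathStrengths x y z) (hpos : 0 < s) :
    ((G.cut s).Reachable x y ∧ s ≤ G.eta y z) ∨ ((G.cut s).Reachable x z ∧ s ≤ G.eta z y) := by
  obtain ⟨l, -, hx, ⟨hy, rfl⟩ | ⟨hz, rfl⟩⟩ := hs
  · exact .inl ⟨G.reachable_cut_of_le_chainStrength hpos hx hy (min_le_left _ _), min_le_right _ _⟩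
  · exact .inr ⟨G.reachable_cut_of_le_chainStrength hpos hx hz (min_le_left _ _), min_le_right _ _⟩

lemma deletePair_eta_le (G : FIG V) (a b u v : V) : (G.deletePair a b).eta u v ≤ G.eta u v := by
  change ite _ _ _ ≤ _
  split
  · exact G.eta_nonneg u v
  · exact le_rfl

lemma deletePair_eta_of_not (G : FIG V) {a b u v : V} (h : ¬(u = a ∧ v = b)) :
    (G.deletePair a b).eta u v = G.eta u v :=
  if_neg h

lemma cut_le_cut_deletePair (G : FIG V) {x y : V} {c : ℝ} (h : G.eta x y < c) :
    G.cut c ≤ (G.deletePair x y).cut c := by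
  rintro a b ⟨hne, hab⟩
  have hxy : ¬(a = x ∧ b = y) := by
    rintro ⟨rfl, rfl⟩
    exact h.not_ge (hab.trans (min_le_left _ _))
  have hyx : ¬(b = x ∧ a = y) := by
    rintro ⟨rfl, rfl⟩
    exact h.not_ge (hab.trans (min_le_right _ _))
  refine ⟨hne, ?_⟩
  rwa [pairMin, G.deletePair_eta_of_not hxy, G.deletePair_eta_of_not hyx]

theorem strong_iff_le_eta_of_reachable_cut (G : FIG V) :
    G.Strong ↔ ∀ x y c, 0 < G.eta x y → (G.cut c).Reachable x y → c ≤ G.eta y x →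
      c ≤ G.eta x y := by
  have eta_yx : ∀ {x y : V}, x ≠ y → (G.deletePair x y).eta y x = G.eta y x :=
    fun hxy => G.deletePair_eta_of_not fun h => hxy h.1.symm
  constructor
  · intro hG x y c hxy hreach hc
    by_contra! hlt
    have hdel : ((G.deletePair x y).cut c).Reachable x y :=
      hreach.mono (G.cut_le_cut_deletePair hlt)
    have hICONN := (G.deletePair x y).le_ICONN_of_reachable_cut hdel
      (hc.trans_eq (eta_yx (ne_of_eta_pos hxy)).symm)
    exact hlt.not_ge (hICONN.trans (hG x y hxy))
  · intro h x y hxy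
    refine Real.sSup_le (fun s hs => ?_) hxy.le
    rcases le_or_gt s 0 with hs0 | hs0
    · exact hs0.trans hxy.le
    rcases (G.deletePair x y).reachable_cut_of_mem_pathStrengths hs hs0 with
      ⟨-, hsx⟩ | ⟨hreach, hsy⟩
    · exact absurd (hsx.trans_eq (if_pos ⟨rfl, rfl⟩)) hs0.not_ge
    · exact h x y s hxy (hreach.mono (cut_mono (G.deletePair_eta_le x y) s))
        (hsy.trans_eq (eta_yx (ne_of_eta_pos hxy)))

lemma cartesian_eta (G₁ : FIG V₁) (G₂ : FIG V₂) (p q : V₁ × V₂) :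
    (G₁.cartesian G₂).eta p q =
      if p.1 = q.1 then
        (if 0 < G₂.eta p.2 q.2 ∧ 0 < G₂.eta q.2 p.2 then
          min (G₁.eps p.1) (G₂.eta p.2 q.2) else 0)
      else if p.2 = q.2 then
        (if 0 < G₁.eta p.1 q.1 ∧ 0 < G₁.eta q.1 p.1 then
          min (G₁.eta p.1 q.1) (G₂.eps p.2) else 0)
      else 0 :=
  rfl

lemma cartesian_eta_le_eta_fst (G₁ : FIG V₁) (G₂ : FIG V₂) {p q : V₁ × V₂} (h : p.1 ≠ q.1) :
    (G₁.cartesian G₂).eta p q ≤ G₁.eta p.1 q.1 := by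
  rw [cartesian_eta, if_neg h]
  split_ifs
  · exact min_le_left _ _
  all_goals exact G₁.eta_nonneg _ _

lemma cartesian_eta_le_eta_snd (G₁ : FIG V₁) (G₂ : FIG V₂) {p q : V₁ × V₂} (h : p.2 ≠ q.2) :
    (G₁.cartesian G₂).eta p q ≤ G₂.eta p.2 q.2 := by
  rw [cartesian_eta, if_neg h]
  split_ifs
  · exact min_le_right _ _
  all_goals exact G₂.eta_nonneg _ _

lemma cartesian_eta_pos (G₁ : FIG V₁) (G₂ : FIG V₂) {p q : V₁ × V₂}
    (h : 0 < (G₁.cartesian G₂).eta p q) :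
    (p.1 = q.1 ∧ 0 < G₂.eta p.2 q.2 ∧
        (G₁.cartesian G₂).eta p q = min (G₁.eps p.1) (G₂.eta p.2 q.2)) ∨
      (p.2 = q.2 ∧ 0 < G₁.eta p.1 q.1 ∧
        (G₁.cartesian G₂).eta p q = min (G₁.eta p.1 q.1) (G₂.eps p.2)) := by
  rw [cartesian_eta] at h ⊢
  split_ifs at h ⊢ with h₁ hpos₂ h₂ hpos₁
  · exact .inl ⟨h₁, hpos₂.1, rfl⟩
  · exact absurd h (lt_irrefl 0)
  · exact .inr ⟨h₂, hpos₁.1, rfl⟩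
  all_goals exact absurd h (lt_irrefl 0)

lemma reachable_cut_fst (G₁ : FIG V₁) (G₂ : FIG V₂) {c : ℝ} {p q : V₁ × V₂}
    (h : ((G₁.cartesian G₂).cut c).Reachable p q) : (G₁.cut c).Reachable p.1 q.1 :=
  h.map_of_forall_adj Prod.fst fun {u v} huv => by
    by_cases h₁ : u.1 = v.1
    · rw [h₁]
    · exact SimpleGraph.Adj.reachable ⟨h₁, huv.2.trans (min_le_min
        (cartesian_eta_le_eta_fst G₁ G₂ h₁) (cartesian_eta_le_eta_fst G₁ G₂ (Ne.symm h₁)))⟩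

lemma reachable_cut_snd (G₁ : FIG V₁) (G₂ : FIG V₂) {c : ℝ} {p q : V₁ × V₂}
    (h : ((G₁.cartesian G₂).cut c).Reachable p q) : (G₂.cut c).Reachable p.2 q.2 :=
  h.map_of_forall_adj Prod.snd fun {u v} huv => by
    by_cases h₂ : u.2 = v.2
    · rw [h₂]
    · exact SimpleGraph.Adj.reachable ⟨h₂, huv.2.trans (min_le_min
        (cartesian_eta_le_eta_snd G₁ G₂ h₂) (cartesian_eta_le_eta_snd G₁ G₂ (Ne.symm h₂)))⟩

/-- **Theorem 19.** The Cartesian product of two strong fuzzy incidence graphs is a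
strong fuzzy incidence graph. -/
theorem cartesian_strong (G₁ : FIG V₁) (G₂ : FIG V₂)
    (h₁ : G₁.Strong) (h₂ : G₂.Strong) : (G₁.cartesian G₂).Strong := by
  rw [strong_iff_le_eta_of_reachable_cut] at h₁ h₂ ⊢
  intro p q c hpq hreach hc
  have hc_eps : c ≤ min (G₁.eps q.1) (G₂.eps q.2) :=
    hc.trans ((G₁.cartesian G₂).eta_le_eps q p)
  rcases cartesian_eta_pos G₁ G₂ hpq with ⟨hfst, hpos, heq⟩ | ⟨hsnd, hpos, heq⟩
  · rw [heq, hfst]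
    refine le_min (hc_eps.trans (min_le_left _ _))
      (h₂ _ _ c hpos (reachable_cut_snd G₁ G₂ hreach) ?_)
    exact hc.trans (cartesian_eta_le_eta_snd G₁ G₂ (ne_of_eta_pos hpos).symm)
  · rw [heq, hsnd]
    refine le_min (h₁ _ _ c hpos (reachable_cut_fst G₁ G₂ hreach) ?_)
      (hc_eps.trans (min_le_right _ _))
    exact hc.trans (cartesian_eta_le_eta_fst G₁ G₂ (ne_of_eta_pos hpos).symm)

end FIG
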